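/- Let F = l^∞(u_k) with weights u_k = 1/(k+1) for k ≥ 0 and u_k = 1 for k < 0, so that ‖a‖_E = sup_{k≥0} K(2^k, a; l^1, l^2)/(k+1) for the K-method space E = (l^1, l^2)^K_F. Then E coincides with the space l^1(log) of sequences a with ‖a‖_{l^1(log)} = sup_{k≥1} (log_2(2k))^{-1} Σ_{i=1}^k a_i* < ∞, and the two norms are equivalent: ‖a‖_E ≤ 14 ‖a‖_{l^1(log)} and ‖a‖_{l^1(log)} ≤ 2B ‖a‖_E, where B is the Holmstedt constant. -/

import Mathlib

open MeasureTheory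
open scoped ENNReal

/-- The nonincreasing rearrangement of the sequence `(|a_k|)` (0-indexed). -/
noncomputable def decRearrSeq (a : ℕ → ℝ) (k : ℕ) : ℝ :=
  sInf {τ : ℝ | 0 ≤ τ ∧ Measure.count {i : ℕ | τ < |a i|} ≤ (k : ℝ≥0∞)}

/-- The Peetre K-functional for the couple `(ℓ¹, ℓ²)`. -/
noncomputable def Kl (t : ℝ) (a : ℕ → ℝ) : ℝ≥0∞ :=
  ⨅ (b : ℕ → ℝ) (c : ℕ → ℝ) (_ : a = b + c),
    (∑' k, ENNReal.ofReal |b k|) +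
      ENNReal.ofReal t * (∑' k, ENNReal.ofReal ((c k) ^ 2)) ^ (1/2 : ℝ)

/-- The Holmstedt expression for the couple `(ℓ¹, ℓ²)`. -/
noncomputable def holmstedt (t : ℝ) (a : ℕ → ℝ) : ℝ≥0∞ :=
  (∑ k ∈ Finset.range ⌊t ^ 2⌋₊, ENNReal.ofReal (decRearrSeq a k)) +
    ENNReal.ofReal t *
      (∑' k : ℕ, ENNReal.ofReal ((decRearrSeq a (⌊t ^ 2⌋₊ + k)) ^ 2)) ^ (1/2 : ℝ)

/-- The norm of the K-method space `E = (ℓ¹,ℓ²)^K_F`, `F = ℓ^∞(u_k)` with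
`u_k = 1/(k+1)` for `k ≥ 0` (and `u_k = 1` for `k < 0`, which contributes nothing):
`‖a‖_E = sup_{k ≥ 0} K(2^k, a; ℓ¹, ℓ²)/(k+1)`. -/
noncomputable def normE (a : ℕ → ℝ) : ℝ≥0∞ :=
  ⨆ k : ℕ, Kl ((2 : ℝ) ^ k) a / ((k : ℝ≥0∞) + 1)

/-- The norm of the space `ℓ¹(log)`:
`‖a‖ = sup_{k ≥ 1} (log₂(2k))⁻¹ ∑_{i=1}^k a_i*`. -/
noncomputable def norml1log (a : ℕ → ℝ) : ℝ≥0∞ :=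
  ⨆ k : ℕ, ENNReal.ofReal
    ((Real.logb 2 (2 * ((k : ℝ) + 1)))⁻¹ * ∑ i ∈ Finset.range (k + 1), decRearrSeq a i)

/-!
Write `M = ‖a‖_{ℓ¹(log)}`, so that `∑_{i<N} a*_i ≤ log₂(2N) M` for every `N`, and compare
`K(2ⁿ, a)` with the Holmstedt expression at `t = 2ⁿ`, whose head is `∑_{k<4ⁿ} a*_k`.

Upper bound: the head is at most `(2n+1) M`, and since `a*` is nonincreasing,
`4ʲ a*_{4ʲ} ≤ (2j+1) M`. Condensing the tail `∑_{k ≥ 4ⁿ} (a*_k)²` over the blocks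
`[4^{n+m}, 4^{n+m+1})` bounds it by a geometric series, `≤ (10 (n+1) M / 2ⁿ)²`,
so `K(2ⁿ, a) ≤ 14 (n+1) M`.

Lower bound: for `N = k+1` take `n = ⌊log₂ N⌋`; then `N ≤ 4ⁿ` and `n + 1 ≤ log₂(2N)`, so
`∑_{i<N} a*_i ≤ H(2ⁿ) ≤ B K(2ⁿ, a) ≤ B (n+1) ‖a‖_E ≤ B log₂(2N) ‖a‖_E`.
-/

open Finset

lemma decRearrSeq_nonneg (a : ℕ → ℝ) (k : ℕ) : 0 ≤ decRearrSeq a k :=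
  Real.sInf_nonneg fun _ hτ => hτ.1

lemma exists_forall_abs_le_of_count_le {a : ℕ → ℝ} {τ : ℝ} {j : ℕ}
    (h : Measure.count {i : ℕ | τ < |a i|} ≤ (j : ℝ≥0∞)) : ∃ σ, τ ≤ σ ∧ ∀ i, |a i| ≤ σ := by
  have hfin : {i : ℕ | τ < |a i|}.Finite :=
    Measure.count_apply_lt_top.1 (h.trans_lt (ENNReal.natCast_lt_top j))
  obtain ⟨b, hb⟩ := (hfin.image fun i => |a i|).bddAbove
  refine ⟨max τ b, le_max_left _ _, fun i => ?_⟩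
  by_cases hi : τ < |a i|
  · exact (hb ⟨i, hi, rfl⟩).trans (le_max_right _ _)
  · exact (not_lt.1 hi).trans (le_max_left _ _)

lemma decRearrSeq_antitone (a : ℕ → ℝ) : Antitone (decRearrSeq a) := by
  refine antitone_nat_of_succ_le fun k => ?_
  have hmono : ∀ {j j' : ℕ}, j ≤ j' →
      {τ : ℝ | 0 ≤ τ ∧ Measure.count {i : ℕ | τ < |a i|} ≤ (j : ℝ≥0∞)} ⊆
        {τ : ℝ | 0 ≤ τ ∧ Measure.count {i : ℕ | τ < |a i|} ≤ (j' : ℝ≥0∞)} :=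
    fun hj τ hτ => ⟨hτ.1, hτ.2.trans (Nat.cast_le.2 hj)⟩
  rcases Set.eq_empty_or_nonempty
    {τ : ℝ | 0 ≤ τ ∧ Measure.count {i : ℕ | τ < |a i|} ≤ (k : ℝ≥0∞)} with hk | hk
  · -- a point of the `(k+1)`-st set yields a bound of `|a|`, which lies in the `0`-th set
    suffices h : {τ : ℝ | 0 ≤ τ ∧ Measure.count {i : ℕ | τ < |a i|} ≤ ((k + 1 : ℕ) : ℝ≥0∞)} = ∅ by
      simp only [decRearrSeq, hk, h, le_refl]
    refine Set.eq_empty_of_forall_notMem fun τ hτ => ?_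
    obtain ⟨σ, hτσ, hσ⟩ := exists_forall_abs_le_of_count_le hτ.2
    refine (Set.eq_empty_iff_forall_notMem.1 hk) σ (hmono (Nat.zero_le k) ⟨hτ.1.trans hτσ, ?_⟩)
    simp [fun i => not_lt.2 (hσ i)]
  · exact csInf_le_csInf ⟨0, fun _ hτ => hτ.1⟩ hk (hmono k.le_succ)

lemma succ_sq_le_three_mul_two_pow : ∀ m : ℕ, (m + 1) ^ 2 ≤ 3 * 2 ^ m
  | 0 | 1 | 2 => by norm_num
  | m + 3 => by
    have ih := succ_sq_le_three_mul_two_pow (m + 2)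
    rw [pow_succ 2]
    nlinarith [Nat.zero_le (m * m)]

lemma logb_two_mul_four_pow (j : ℕ) : Real.logb 2 (2 * 4 ^ j) = 2 * j + 1 := by
  rw [show (2 : ℝ) * 4 ^ j = 2 ^ (2 * j + 1) by rw [pow_succ, pow_mul]; norm_num; ring,
    Real.logb_pow, Real.logb_self_eq_one one_lt_two]
  push_cast
  ring

def PartialSumsLogBounded (x : ℕ → ℝ) (M : ℝ) : Prop :=
  ∀ N : ℕ, ∑ i ∈ range N, x i ≤ Real.logb 2 (2 * N) * M

namespace PartialSumsLogBounded

variable {x : ℕ → ℝ} {M : ℝ}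

lemma sum_range_four_pow_le (hM : PartialSumsLogBounded x M) (j : ℕ) :
    ∑ i ∈ range (4 ^ j), x i ≤ (2 * j + 1) * M := by
  simpa [logb_two_mul_four_pow] using hM (4 ^ j)

lemma nonneg (hM : PartialSumsLogBounded x M) (hx0 : 0 ≤ x 0) : 0 ≤ M :=
  hx0.trans (by simpa using hM.sum_range_four_pow_le 0)

lemma four_pow_mul_le (hM : PartialSumsLogBounded x M) (hx : Antitone x) (j : ℕ) :
    4 ^ j * x (4 ^ j) ≤ (2 * j + 1) * M := by
  have h := card_nsmul_le_sum (range (4 ^ j)) x (x (4 ^ j))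
    fun i hi => hx (mem_range.1 hi).le
  simp only [card_range, nsmul_eq_mul, Nat.cast_pow, Nat.cast_ofNat] at h
  exact h.trans (hM.sum_range_four_pow_le j)

lemma four_pow_succ_mul_sq_le (hM : PartialSumsLogBounded x M) (hx : Antitone x)
    (hx0 : ∀ k, 0 ≤ x k) (n m : ℕ) :
    4 ^ (n + m + 1) * x (4 ^ (n + m)) ^ 2 ≤ 48 * (n + 1) ^ 2 * M ^ 2 / 4 ^ n * 2⁻¹ ^ m := by
  set y := 4 ^ (n + m) * x (4 ^ (n + m))
  have hnm : ((2 * (n + m : ℕ) + 1 : ℝ)) ^ 2 ≤ 4 * (n + 1) ^ 2 * (m + 1) ^ 2 := by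
    push_cast
    nlinarith [mul_nonneg (Nat.cast_nonneg (α := ℝ) n) (Nat.cast_nonneg (α := ℝ) m)]
  have hm : ((m : ℝ) + 1) ^ 2 ≤ 3 * 2 ^ m := by exact_mod_cast succ_sq_le_three_mul_two_pow m
  have h4 : (4 : ℝ) ^ (n + m) = 4 ^ n * 2 ^ m * 2 ^ m := by
    rw [pow_add, mul_assoc, ← mul_pow]; norm_num
  calc 4 ^ (n + m + 1) * x (4 ^ (n + m)) ^ 2 = 4 * y ^ 2 / 4 ^ (n + m) := by
        field_simp; ring
    _ ≤ 4 * (4 * (n + 1) ^ 2 * (3 * 2 ^ m) * M ^ 2) / 4 ^ (n + m) := by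
        gcongr
        calc y ^ 2 ≤ ((2 * (n + m : ℕ) + 1) * M) ^ 2 :=
              pow_le_pow_left₀ (by positivity [hx0 (4 ^ (n + m))]) (hM.four_pow_mul_le hx _) 2
          _ ≤ 4 * (n + 1) ^ 2 * (m + 1) ^ 2 * M ^ 2 := by
            rw [mul_pow]; gcongr
          _ ≤ 4 * (n + 1) ^ 2 * (3 * 2 ^ m) * M ^ 2 := by gcongr
    _ = 48 * (n + 1) ^ 2 * M ^ 2 / 4 ^ n * 2⁻¹ ^ m := by
        rw [h4, inv_pow]; field_simp; ring

lemma tsum_sq_four_pow_add_le (hM : PartialSumsLogBounded x M) (hx : Antitone x)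
    (hx0 : ∀ k, 0 ≤ x k) (n : ℕ) :
    ∑' k, ENNReal.ofReal (x (4 ^ n + k) ^ 2) ≤ ENNReal.ofReal (10 * (n + 1) * M / 2 ^ n) ^ 2 := by
  set f : ℕ → ℝ≥0∞ := fun k => ENNReal.ofReal (x k ^ 2)
  have hf : ∀ ⦃i j⦄, 0 < i → i ≤ j → f j ≤ f i := fun i j _ hij =>
    ENNReal.ofReal_le_ofReal (pow_le_pow_left₀ (hx0 j) (hx hij) 2)
  have hu : StrictMono fun m => 4 ^ (n + m) := fun m m' h =>
    Nat.pow_lt_pow_right (by norm_num) (by omega)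
  -- condense over the blocks `[4^(n+m), 4^(n+m+1))`, then cancel the first `4ⁿ` terms
  have hcond := ENNReal.le_tsum_schlomilch hf (fun m => by positivity) hu
  rw [← ENNReal.summable.sum_add_tsum_nat_add', add_zero,
    ENNReal.add_le_add_iff_left (ENNReal.sum_ne_top.2 fun _ _ => ENNReal.ofReal_ne_top)] at hcond
  have hblock (m : ℕ) : ((4 ^ (n + (m + 1)) : ℕ) - (4 ^ (n + m) : ℕ) : ℝ≥0∞) * f (4 ^ (n + m)) ≤
      ENNReal.ofReal (48 * (n + 1) ^ 2 * M ^ 2 / 4 ^ n) * 2⁻¹ ^ m := by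
    grw [tsub_le_self]
    rw [← ENNReal.ofReal_natCast, ← ENNReal.ofReal_mul (by positivity), ← ENNReal.ofReal_ofNat 2,
      ← ENNReal.ofReal_inv_of_pos two_pos, ← ENNReal.ofReal_pow (by norm_num),
      ← ENNReal.ofReal_mul (by positivity)]
    refine ENNReal.ofReal_le_ofReal ?_
    push_cast
    simpa only [add_assoc] using hM.four_pow_succ_mul_sq_le hx hx0 n m
  calc ∑' k, ENNReal.ofReal (x (4 ^ n + k) ^ 2) = ∑' k, f (k + 4 ^ n) := by
        simp only [f, add_comm]
    _ ≤ ∑' m, ENNReal.ofReal (48 * (n + 1) ^ 2 * M ^ 2 / 4 ^ n) * 2⁻¹ ^ m :=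
        hcond.trans (ENNReal.tsum_le_tsum hblock)
    _ = ENNReal.ofReal (96 * (n + 1) ^ 2 * M ^ 2 / 4 ^ n) := by
        rw [ENNReal.tsum_mul_left, ENNReal.tsum_geometric, ENNReal.one_sub_inv_two, inv_inv,
          ← ENNReal.ofReal_ofNat 2, ← ENNReal.ofReal_mul (by positivity)]
        ring_nf
    _ ≤ ENNReal.ofReal (10 * (n + 1) * M / 2 ^ n) ^ 2 := by
        have hM0 := hM.nonneg (hx0 0)
        rw [← ENNReal.ofReal_pow (by positivity), div_pow, ← pow_mul, mul_comm n, pow_mul]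
        refine ENNReal.ofReal_le_ofReal ?_
        norm_num
        gcongr
        nlinarith

lemma sum_add_mul_rpow_tsum_le (hM : PartialSumsLogBounded x M) (hx : Antitone x)
    (hx0 : ∀ k, 0 ≤ x k) (n : ℕ) :
    ∑ k ∈ range (4 ^ n), ENNReal.ofReal (x k) +
        ENNReal.ofReal (2 ^ n) * (∑' k, ENNReal.ofReal (x (4 ^ n + k) ^ 2)) ^ (1 / 2 : ℝ) ≤
      ENNReal.ofReal (14 * (n + 1) * M) := by
  have hM0 := hM.nonneg (hx0 0)
  have hhead : ∑ k ∈ range (4 ^ n), ENNReal.ofReal (x k) ≤ ENNReal.ofReal ((2 * n + 1) * M) := by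
    rw [← ENNReal.ofReal_sum_of_nonneg fun k _ => hx0 k]
    exact ENNReal.ofReal_le_ofReal (hM.sum_range_four_pow_le n)
  have htail : (∑' k, ENNReal.ofReal (x (4 ^ n + k) ^ 2)) ^ (1 / 2 : ℝ) ≤
      ENNReal.ofReal (10 * (n + 1) * M / 2 ^ n) := by
    rw [one_div, ENNReal.rpow_inv_le_iff two_pos, ENNReal.rpow_two]
    exact hM.tsum_sq_four_pow_add_le hx hx0 n
  calc _ ≤ ENNReal.ofReal ((2 * n + 1) * M) +
        ENNReal.ofReal (2 ^ n) * ENNReal.ofReal (10 * (n + 1) * M / 2 ^ n) := by gcongr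
    _ = ENNReal.ofReal ((2 * n + 1) * M + 10 * (n + 1) * M) := by
        rw [← ENNReal.ofReal_mul (by positivity), ← ENNReal.ofReal_add (by positivity)
          (by positivity), mul_div_cancel₀ _ (by positivity)]
    _ ≤ ENNReal.ofReal (14 * (n + 1) * M) := ENNReal.ofReal_le_ofReal (by nlinarith)

end PartialSumsLogBounded

lemma ofReal_natCast_add_one (n : ℕ) : ENNReal.ofReal (n + 1) = n + 1 := by
  exact_mod_cast ENNReal.ofReal_natCast (n + 1)

lemma partialSumsLogBounded_decRearrSeq {a : ℕ → ℝ} (h : norml1log a ≠ ⊤) :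
    PartialSumsLogBounded (decRearrSeq a) (norml1log a).toReal := by
  intro N
  cases N with
  | zero => simp
  | succ k =>
    have hc : 0 < Real.logb 2 (2 * (k + 1)) :=
      Real.logb_pos one_lt_two (by linarith [k.cast_nonneg (α := ℝ)])
    have hk : ENNReal.ofReal ((Real.logb 2 (2 * (k + 1)))⁻¹ *
        ∑ i ∈ range (k + 1), decRearrSeq a i) ≤ norml1log a := le_iSup_of_le k le_rfl
    rw [ENNReal.ofReal_le_iff_le_toReal h, inv_mul_le_iff₀ hc] at hk
    exact_mod_cast hk

lemma floor_two_pow_sq (n : ℕ) : ⌊((2 : ℝ) ^ n) ^ 2⌋₊ = 4 ^ n := by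
  rw [← pow_mul, mul_comm, pow_mul]
  exact_mod_cast Nat.floor_natCast (4 ^ n)

lemma holmstedt_two_pow (a : ℕ → ℝ) (n : ℕ) :
    holmstedt (2 ^ n) a = ∑ k ∈ range (4 ^ n), ENNReal.ofReal (decRearrSeq a k) +
      ENNReal.ofReal (2 ^ n) *
        (∑' k, ENNReal.ofReal (decRearrSeq a (4 ^ n + k) ^ 2)) ^ (1 / 2 : ℝ) := by
  rw [holmstedt, floor_two_pow_sq]

lemma Kl_two_pow_le_mul_normE (a : ℕ → ℝ) (n : ℕ) : Kl (2 ^ n) a ≤ (n + 1) * normE a := by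
  have h : Kl (2 ^ n) a / (n + 1) ≤ normE a := le_iSup_of_le n le_rfl
  rwa [ENNReal.div_le_iff (by positivity) (by simp), mul_comm] at h

lemma normE_le_fourteen_mul_norml1log {a : ℕ → ℝ}
    (hK : ∀ n : ℕ, Kl (2 ^ n) a ≤ holmstedt (2 ^ n) a) : normE a ≤ 14 * norml1log a := by
  rcases eq_or_ne (norml1log a) ⊤ with h | h
  · simp [h]
  refine iSup_le fun n => (ENNReal.div_le_iff (by positivity) (by simp)).2 ?_
  calc Kl (2 ^ n) a ≤ holmstedt (2 ^ n) a := hK n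
    _ ≤ ENNReal.ofReal (14 * (n + 1) * (norml1log a).toReal) := by
        rw [holmstedt_two_pow]
        exact (partialSumsLogBounded_decRearrSeq h).sum_add_mul_rpow_tsum_le
          (decRearrSeq_antitone a) (decRearrSeq_nonneg a) n
    _ = 14 * norml1log a * (n + 1) := by
        rw [ENNReal.ofReal_mul (by positivity), ENNReal.ofReal_toReal h,
          ENNReal.ofReal_mul (by norm_num), ENNReal.ofReal_ofNat, ofReal_natCast_add_one]
        ring

lemma le_four_pow_log_two (N : ℕ) : N ≤ 4 ^ Nat.log 2 N := by
  have hlt := Nat.lt_pow_succ_log_self one_lt_two N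
  rw [pow_succ] at hlt
  rw [show 4 ^ Nat.log 2 N = 2 ^ Nat.log 2 N * 2 ^ Nat.log 2 N by rw [← mul_pow]; rfl]
  nlinarith [Nat.one_le_two_pow (n := Nat.log 2 N)]

lemma log_two_add_one_le_logb {N : ℕ} (hN : N ≠ 0) :
    (Nat.log 2 N + 1 : ℝ) ≤ Real.logb 2 (2 * N) := by
  rw [Real.logb_mul two_ne_zero (by exact_mod_cast hN), Real.logb_self_eq_one one_lt_two, add_comm]
  have h := Real.natLog_le_logb N 2
  push_cast at h
  linarith

lemma norml1log_le_mul_normE {a : ℕ → ℝ} {B : ℝ}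
    (hB : ∀ n : ℕ, holmstedt (2 ^ n) a ≤ ENNReal.ofReal B * Kl (2 ^ n) a) :
    norml1log a ≤ ENNReal.ofReal B * normE a := by
  refine iSup_le fun k => ?_
  have hn : (Nat.log 2 (k + 1) + 1 : ℝ) ≤ Real.logb 2 (2 * (k + 1)) := by
    exact_mod_cast log_two_add_one_le_logb k.succ_ne_zero
  set n := Nat.log 2 (k + 1)
  set c := Real.logb 2 (2 * (k + 1))
  have hc : 0 < c := (by positivity : (0 : ℝ) < n + 1).trans_le hn
  calc ENNReal.ofReal (c⁻¹ * ∑ i ∈ range (k + 1), decRearrSeq a i)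
      ≤ ENNReal.ofReal c⁻¹ * ∑ i ∈ range (4 ^ n), ENNReal.ofReal (decRearrSeq a i) := by
        rw [ENNReal.ofReal_mul (inv_nonneg.2 hc.le),
          ENNReal.ofReal_sum_of_nonneg fun i _ => decRearrSeq_nonneg a i]
        gcongr
        exact le_four_pow_log_two (k + 1)
    _ ≤ ENNReal.ofReal c⁻¹ * (ENNReal.ofReal B * ((n + 1) * normE a)) := by
        gcongr
        calc _ ≤ holmstedt (2 ^ n) a := by rw [holmstedt_two_pow]; exact le_self_add
          _ ≤ _ := (hB n).trans (by gcongr; exact Kl_two_pow_le_mul_normE a n)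
    _ = ENNReal.ofReal (c⁻¹ * (n + 1)) * (ENNReal.ofReal B * normE a) := by
        rw [ENNReal.ofReal_mul (inv_nonneg.2 hc.le), ofReal_natCast_add_one]
        ring
    _ ≤ ENNReal.ofReal B * normE a :=
        mul_le_of_le_one_left' (ENNReal.ofReal_le_one.2 (inv_mul_le_one_of_le₀ hn hc.le))

theorem Kmethod_eq_l1log_general (B : ℝ)
    (hB : ∀ (a : ℕ → ℝ) (t : ℝ), 0 < t →
      Kl t a ≤ holmstedt t a ∧ holmstedt t a ≤ ENNReal.ofReal B * Kl t a) :
    ∀ a : ℕ → ℝ,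
      normE a ≤ 14 * norml1log a ∧ norml1log a ≤ ENNReal.ofReal (2 * B) * normE a := by
  intro a
  have hB_two_pow (n : ℕ) := hB a (2 ^ n) (by positivity)
  refine ⟨normE_le_fourteen_mul_norml1log fun n => (hB_two_pow n).1, ?_⟩
  calc norml1log a ≤ ENNReal.ofReal B * normE a :=
        norml1log_le_mul_normE fun n => (hB_two_pow n).2
    _ ≤ ENNReal.ofReal (2 * B) * normE a := by
        gcongr ?_ * _
        exact ENNReal.ofReal_le_ofReal_iff'.2 ((le_total 0 B).imp (fun h => by linarith) id)

/-- `(ℓ¹, ℓ²)^K_F = ℓ¹(log)` with explicit constants, where `B` is the Holmstedt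
constant: `‖a‖_E ≤ 14 ‖a‖_{ℓ¹(log)}` and `‖a‖_{ℓ¹(log)} ≤ 2B ‖a‖_E`. -/
theorem Kmethod_eq_l1log (B : ℝ) (hB1 : 1 ≤ B)
    (hB : ∀ (a : ℕ → ℝ) (t : ℝ), 0 < t →
      Kl t a ≤ holmstedt t a ∧ holmstedt t a ≤ ENNReal.ofReal B * Kl t a) :
    ∀ a : ℕ → ℝ,
      normE a ≤ 14 * norml1log a ∧ norml1log a ≤ ENNReal.ofReal (2 * B) * normE a :=
  Kmethod_eq_l1log_general B hB
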